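/- arXiv:1604.02194 — 3 statements merged into one kernel-verified Lean document; each statement's English description precedes it below -/
import Mathlib

section
/- Let A : ℝ → Matrix (Fin n) (Fin n) ℝ be continuous and let v₁,…,v_r : ℝ → (Fin n → ℝ) solve the OTD equations v_i' = A v_i − Σ_{k=1}^r ⟪A v_i, v_k⟫ v_k. If the initial conditions {v_i(t₀)} form an orthonormal set, then {v_i(t)} remains orthonormal for all t ≥ t₀. -/
open Matrix

private lemma otd_aux {n r : ℕ} (a : Fin n → ℝ) (w : Fin r → Fin n → ℝ) (j : Fin r) :
    (a - ∑ k, (a ⬝ᵥ w k) • w k) ⬝ᵥ w j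
      = -∑ k, (a ⬝ᵥ w k) * (w k ⬝ᵥ w j - if k = j then 1 else 0) := by
  classical
  have hs : (∑ k, (a ⬝ᵥ w k) • w k) ⬝ᵥ w j = ∑ k, (a ⬝ᵥ w k) * (w k ⬝ᵥ w j) := by
    simp only [dotProduct, Finset.sum_apply, Pi.smul_apply, smul_eq_mul, Finset.mul_sum,
      Finset.sum_mul]
    rw [Finset.sum_comm]
    exact Finset.sum_congr rfl fun k _ => Finset.sum_congr rfl fun l _ =>
      Finset.sum_congr rfl fun x _ => by ring
  rw [sub_dotProduct, hs]
  simp only [mul_sub, Finset.sum_sub_distrib, mul_ite, mul_one, mul_zero,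
    Finset.sum_ite_eq', Finset.mem_univ, if_true, neg_sub]

/-- Orthonormality preservation of the OTD modes. -/
theorem otd_orthonormality_preserved {n r : ℕ}
    (A : ℝ → Matrix (Fin n) (Fin n) ℝ) (hA : Continuous A)
    (v : Fin r → ℝ → (Fin n → ℝ)) (t₀ : ℝ)
    (hode : ∀ i t, HasDerivAt (v i)
      ((A t).mulVec (v i t) - ∑ k : Fin r, (((A t).mulVec (v i t)) ⬝ᵥ (v k t)) • v k t) t)
    (horth : ∀ i j : Fin r, (v i t₀) ⬝ᵥ (v j t₀) = if i = j then 1 else 0) :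
    ∀ t ≥ t₀, ∀ i j : Fin r, (v i t) ⬝ᵥ (v j t) = if i = j then 1 else 0 := by
  classical
  set B : ℝ → Fin r → Fin r → ℝ := fun t i k => ((A t).mulVec (v i t)) ⬝ᵥ (v k t) with hBdef
  set G : ℝ → Fin r → Fin r → ℝ :=
    fun t i j => (v i t) ⬝ᵥ (v j t) - (if i = j then (1:ℝ) else 0) with hGdef
  have hvcont : ∀ i, Continuous (v i) := fun i =>
    continuous_iff_continuousAt.2 fun t => (hode i t).continuousAt
  have hBcont : Continuous B := by
    refine continuous_pi fun i => continuous_pi fun k => ?_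
    simp only [hBdef, dotProduct, mulVec]
    refine continuous_finset_sum _ fun l _ => Continuous.mul ?_ ?_
    · exact continuous_finset_sum _ fun m _ => Continuous.mul
        (((continuous_apply m).comp ((continuous_apply l).comp hA)))
        ((continuous_apply m).comp (hvcont i))
    · exact (continuous_apply l).comp (hvcont k)
  have hG' : ∀ t, HasDerivAt G
      (fun i j => -∑ k, (B t i k * G t k j + B t j k * G t k i)) t := by
    intro t
    refine hasDerivAt_pi.2 fun i => hasDerivAt_pi.2 fun j => ?_
    have hDi := hasDerivAt_pi.1 (hode i t)
    have hDj := hasDerivAt_pi.1 (hode j t)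
    have hdot : HasDerivAt (fun s => G s i j)
        (∑ l, (((A t).mulVec (v i t) - ∑ k : Fin r, (((A t).mulVec (v i t)) ⬝ᵥ (v k t)) • v k t) l * v j t l
          + v i t l * ((A t).mulVec (v j t) - ∑ k : Fin r, (((A t).mulVec (v j t)) ⬝ᵥ (v k t)) • v k t) l)) t := by
      have h1 : HasDerivAt (fun s => (v i s) ⬝ᵥ (v j s))
          (∑ l, (((A t).mulVec (v i t) - ∑ k : Fin r, (((A t).mulVec (v i t)) ⬝ᵥ (v k t)) • v k t) l * v j t l
            + v i t l * ((A t).mulVec (v j t) - ∑ k : Fin r, (((A t).mulVec (v j t)) ⬝ᵥ (v k t)) • v k t) l)) t :=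
        HasDerivAt.fun_sum fun l _ => (hDi l).mul (hDj l)
      exact h1.sub_const _
    convert hdot using 1
    case e'_4 => rfl
    case e'_5 => rfl
    have key : (∑ l, (((A t).mulVec (v i t) - ∑ k : Fin r, (((A t).mulVec (v i t)) ⬝ᵥ (v k t)) • v k t) l * v j t l
          + v i t l * ((A t).mulVec (v j t) - ∑ k : Fin r, (((A t).mulVec (v j t)) ⬝ᵥ (v k t)) • v k t) l))
        = ((A t).mulVec (v i t) - ∑ k : Fin r, (((A t).mulVec (v i t)) ⬝ᵥ (v k t)) • v k t) ⬝ᵥ v j t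
          + ((A t).mulVec (v j t) - ∑ k : Fin r, (((A t).mulVec (v j t)) ⬝ᵥ (v k t)) • v k t) ⬝ᵥ v i t := by
      simp only [dotProduct, Finset.sum_add_distrib]
      congr 1
      exact Finset.sum_congr rfl fun l _ => mul_comm _ _
    rw [key, otd_aux, otd_aux]
    simp only [hBdef, hGdef]
    rw [Finset.sum_add_distrib, neg_add]
  -- Gronwall argument: fix t ≥ t₀
  intro T hT i j
  -- bound B on [t₀, T]
  obtain ⟨C, hC⟩ := (isCompact_Icc (a := t₀) (b := T)).exists_bound_of_continuousOn
    hBcont.continuousOn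
  have hC0 : (0:ℝ) ≤ C := le_trans (norm_nonneg _) (hC t₀ ⟨le_refl _, hT⟩)
  set K : ℝ := 2 * r * C with hK
  have hK0 : (0:ℝ) ≤ K := by positivity
  have hGcont : Continuous G := by
    refine continuous_iff_continuousAt.2 fun t => (hG' t).continuousAt
  have hbound : ∀ x ∈ Set.Ico t₀ T,
      ‖(fun i j => -∑ k, (B x i k * G x k j + B x j k * G x k i) : Fin r → Fin r → ℝ)‖
        ≤ K * ‖G x‖ + 0 := by
    intro x hx
    rw [add_zero]
    have hGnn : (0:ℝ) ≤ K * ‖G x‖ := mul_nonneg hK0 (norm_nonneg _)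
    rw [pi_norm_le_iff_of_nonneg hGnn]
    intro a
    rw [pi_norm_le_iff_of_nonneg hGnn]
    intro b
    have hBab : ∀ p q : Fin r, |B x p q| ≤ C := by
      intro p q
      calc |B x p q| ≤ ‖B x p‖ := norm_le_pi_norm (B x p) q
        _ ≤ ‖B x‖ := norm_le_pi_norm (B x) p
        _ ≤ C := hC x ⟨hx.1, le_of_lt hx.2⟩
    have hGab : ∀ p q : Fin r, |G x p q| ≤ ‖G x‖ := by
      intro p q
      calc |G x p q| ≤ ‖G x p‖ := norm_le_pi_norm (G x p) q
        _ ≤ ‖G x‖ := norm_le_pi_norm (G x) p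
    calc ‖-∑ k, (B x a k * G x k b + B x b k * G x k a)‖
        = |∑ k, (B x a k * G x k b + B x b k * G x k a)| := by
          rw [norm_neg, Real.norm_eq_abs]
      _ ≤ ∑ k, |B x a k * G x k b + B x b k * G x k a| := Finset.abs_sum_le_sum_abs _ _
      _ ≤ ∑ _k : Fin r, 2 * C * ‖G x‖ := by
          refine Finset.sum_le_sum fun k _ => ?_
          calc |B x a k * G x k b + B x b k * G x k a|
              ≤ |B x a k * G x k b| + |B x b k * G x k a| := abs_add_le _ _
            _ = |B x a k| * |G x k b| + |B x b k| * |G x k a| := by rw [abs_mul, abs_mul]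
            _ ≤ C * ‖G x‖ + C * ‖G x‖ := add_le_add
                (mul_le_mul (hBab a k) (hGab k b) (abs_nonneg _) hC0)
                (mul_le_mul (hBab b k) (hGab k a) (abs_nonneg _) hC0)
            _ = 2 * C * ‖G x‖ := by ring
      _ = K * ‖G x‖ := by
          rw [Finset.sum_const, Finset.card_univ, Fintype.card_fin, nsmul_eq_mul, hK]; ring
  have hG0 : ‖G t₀‖ ≤ 0 := by
    have : G t₀ = 0 := by
      funext p q
      simp only [hGdef, horth p q, sub_self, Pi.zero_apply]
    rw [this, norm_zero]
  have hmain := norm_le_gronwallBound_of_norm_deriv_right_le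
    (hGcont.continuousOn) (fun x _ => (hG' x).hasDerivWithinAt) hG0 hbound
  have hGT : ‖G T‖ ≤ 0 := by
    have := hmain T ⟨hT, le_refl _⟩
    rwa [gronwallBound_ε0, zero_mul] at this
  have hGT0 : G T = 0 := norm_le_zero_iff.1 hGT
  have := congrFun (congrFun hGT0 i) j
  simp only [hGdef, Pi.zero_apply] at this
  linarith [this]
end

section
/- Let A : ℝ → Matrix (Fin n) (Fin n) ℝ be continuous, V(t) the n×r matrix whose columns v_i(t) solve the OTD equations with orthonormal initial data, and L_r(t) := V(t)ᵀ A(t) V(t). If η : ℝ → (Fin r → ℝ) solves η' = L_r η, then v(t) := V(t) η(t) solves the full linear equation v' = A(t) v. -/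
open Matrix

/-- Solutions of the reduced linear equation lifted by the OTD basis
solve the full linear equation. -/
theorem otd_reduced_solution_lifts {n r : ℕ}
    (A : ℝ → Matrix (Fin n) (Fin n) ℝ) (hA : Continuous A)
    (v : Fin r → ℝ → (Fin n → ℝ)) (t₀ : ℝ)
    (hode : ∀ i t, HasDerivAt (v i)
      ((A t).mulVec (v i t) - ∑ k : Fin r, (((A t).mulVec (v i t)) ⬝ᵥ (v k t)) • v k t) t)
    (horth : ∀ i j : Fin r, (v i t₀) ⬝ᵥ (v j t₀) = if i = j then 1 else 0)
    (V : ℝ → Matrix (Fin n) (Fin r) ℝ) (hV : ∀ t i k, V t i k = v k t i)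
    (Lr : ℝ → Matrix (Fin r) (Fin r) ℝ) (hLr : ∀ t, Lr t = (V t)ᵀ * A t * V t)
    (η : ℝ → (Fin r → ℝ)) (hη : ∀ t, HasDerivAt η ((Lr t).mulVec (η t)) t) :
    ∀ t, HasDerivAt (fun s => (V s).mulVec (η s)) ((A t).mulVec ((V t).mulVec (η t))) t := by
  intro t
  have key : ∀ s, (V s).mulVec (η s) = ∑ k : Fin r, η s k • v k s := by
    intro s; funext j
    simp [Matrix.mulVec, dotProduct, hV, Finset.sum_apply, mul_comm]
  have hηk : ∀ k : Fin r, HasDerivAt (fun s => η s k) (((Lr t).mulVec (η t)) k) t :=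
    fun k => (hasDerivAt_pi.1 (hη t)) k
  have hsum : HasDerivAt (fun s => ∑ k : Fin r, η s k • v k s)
      (∑ k : Fin r, (η t k • ((A t).mulVec (v k t) -
          ∑ m : Fin r, (((A t).mulVec (v k t)) ⬝ᵥ (v m t)) • v m t) +
        ((Lr t).mulVec (η t)) k • v k t)) t := by
    apply HasDerivAt.fun_sum
    intro k _
    exact (hηk k).smul (hode k t)
  have hdot : ∀ k m : Fin r, ((A t).mulVec (v k t)) ⬝ᵥ (v m t) = Lr t m k := by
    intro k m
    rw [hLr]
    simp only [Matrix.mul_apply, Matrix.mulVec, dotProduct, Matrix.transpose_apply,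
      hV, Finset.sum_mul, Finset.mul_sum]
    rw [Finset.sum_comm]
    apply Finset.sum_congr rfl; intro a _
    apply Finset.sum_congr rfl; intro b _
    ring
  have cancel : ∑ k : Fin r, ((Lr t).mulVec (η t)) k • v k t
      = ∑ k : Fin r, η t k • ∑ m : Fin r, (((A t).mulVec (v k t)) ⬝ᵥ (v m t)) • v m t := by
    simp only [hdot]
    funext j
    simp only [Finset.sum_apply, Pi.smul_apply, smul_eq_mul, Matrix.mulVec,
      dotProduct, Finset.sum_mul, Finset.mul_sum]
    rw [Finset.sum_comm]
    apply Finset.sum_congr rfl; intro a _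
    apply Finset.sum_congr rfl; intro b _
    ring
  have expand : (A t).mulVec (∑ k : Fin r, η t k • v k t)
      = ∑ k : Fin r, η t k • ((A t).mulVec (v k t)) := by
    funext j
    simp only [Matrix.mulVec, dotProduct, Finset.sum_apply, Pi.smul_apply,
      smul_eq_mul, Finset.mul_sum, Finset.sum_mul]
    rw [Finset.sum_comm]
    apply Finset.sum_congr rfl; intro a _
    apply Finset.sum_congr rfl; intro b _
    ring
  rw [show (fun s => (V s).mulVec (η s)) = (fun s => ∑ k : Fin r, η s k • v k s) from funext key]
  convert hsum using 1
  rw [key t, expand, Finset.sum_add_distrib]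
  simp only [smul_sub, Finset.sum_sub_distrib]
  rw [cancel]
  abel
end

section
/- Let A : ℝ → Matrix (Fin n) (Fin n) ℝ be continuous and let v : ℝ → (Fin n → ℝ) solve the single-mode OTD equation v' = A v − ⟪A v, v⟫ v with ‖v(t₀)‖ = 1. Then ‖v(t)‖ = 1 for all t, and the reduced 1×1 operator λ₁(t) := ⟪v(t), A(t) v(t)⟫ equals the Rayleigh quotient of the symmetric part of A(t) at v(t), i.e., λ₁(t) = ⟪v(t), (A(t)+A(t)ᵀ)/2 · v(t)⟫. -/
open Matrix

/-- the single-mode OTD equation preserves the unit norm, and the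
reduced 1×1 operator equals the Rayleigh quotient of the symmetric part of A. -/
theorem single_otd_mode_norm_and_rayleigh {n : ℕ}
    (A : ℝ → Matrix (Fin n) (Fin n) ℝ) (hA : Continuous A)
    (v : ℝ → (Fin n → ℝ)) (t₀ : ℝ)
    (hode : ∀ t, HasDerivAt v
      ((A t).mulVec (v t) - (((A t).mulVec (v t)) ⬝ᵥ (v t)) • v t) t)
    (hnorm : v t₀ ⬝ᵥ v t₀ = 1) :
    ∀ t, v t ⬝ᵥ v t = 1 ∧
      v t ⬝ᵥ ((A t).mulVec (v t)) =
        v t ⬝ᵥ ((((1 : ℝ) / 2) • (A t + (A t)ᵀ)).mulVec (v t)) := by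
  have hv_cont : Continuous v := by
    apply continuous_iff_continuousAt.2
    intro t
    exact (hode t).continuousAt
  have hvi : ∀ i, Continuous fun t => v t i := fun i => (continuous_apply i).comp hv_cont
  have hAij : ∀ i j, Continuous fun t => A t i j := fun i j =>
    (continuous_apply j).comp ((continuous_apply i).comp hA)
  have hAv : Continuous fun t => (A t).mulVec (v t) := by
    apply continuous_pi
    intro i
    simp only [Matrix.mulVec, dotProduct]
    exact continuous_finset_sum _ fun j _ => (hAij i j).mul (hvi j)
  set c : ℝ → ℝ := fun t => 2 * ((A t).mulVec (v t) ⬝ᵥ v t) with hc_def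
  have hc_cont : Continuous c := by
    apply continuous_const.mul
    simp only [dotProduct]
    exact continuous_finset_sum _ fun j _ =>
      (((continuous_apply j).comp hAv)).mul (hvi j)
  -- derivative of g t = v t ⬝ᵥ v t - 1
  set g : ℝ → ℝ := fun t => v t ⬝ᵥ v t - 1 with hg_def
  have hg : ∀ t, HasDerivAt g (-(c t) * g t) t := by
    intro t
    have hvd : ∀ i, HasDerivAt (fun s => v s i)
        (((A t).mulVec (v t) - (((A t).mulVec (v t)) ⬝ᵥ (v t)) • v t) i) t :=
      fun i => hasDerivAt_pi.1 (hode t) i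
    have hdot : HasDerivAt (fun s => v s ⬝ᵥ v s)
        (∑ i, (((A t).mulVec (v t) - (((A t).mulVec (v t)) ⬝ᵥ (v t)) • v t) i * v t i
          + v t i * ((A t).mulVec (v t) - (((A t).mulVec (v t)) ⬝ᵥ (v t)) • v t) i)) t := by
      simp only [dotProduct]
      exact HasDerivAt.fun_sum fun i _ => (hvd i).mul (hvd i)
    have := hdot.sub_const 1
    refine this.congr_deriv ?_
    set a := (A t).mulVec (v t) with ha
    set lam := a ⬝ᵥ v t with hlam
    have hsum : (∑ i, ((a - lam • v t) i * v t i + v t i * (a - lam • v t) i))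
        = 2 * (∑ i, a i * v t i) - 2 * lam * (∑ i, v t i * v t i) := by
      rw [Finset.mul_sum, Finset.mul_sum, ← Finset.sum_sub_distrib]
      refine Finset.sum_congr rfl fun i _ => ?_
      simp only [Pi.sub_apply, Pi.smul_apply, smul_eq_mul]
      ring
    rw [hsum]
    have h1 : lam = ∑ i, a i * v t i := rfl
    have h2 : v t ⬝ᵥ v t = ∑ i, v t i * v t i := rfl
    simp only [hg_def, hc_def, ← ha, ← hlam, h2, ← h1]
    ring
  -- integrating factor
  set C : ℝ → ℝ := fun t => ∫ s in t₀..t, c s with hC_def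
  have hC : ∀ t, HasDerivAt C (c t) t := by
    intro t
    exact intervalIntegral.integral_hasDerivAt_right
      (hc_cont.intervalIntegrable _ _)
      hc_cont.aestronglyMeasurable.stronglyMeasurableAtFilter
      hc_cont.continuousAt
  have hh : ∀ t, HasDerivAt (fun t => g t * Real.exp (C t)) 0 t := by
    intro t
    have := (hg t).mul ((hC t).exp)
    refine this.congr_deriv ?_
    ring
  have hconst : ∀ t, g t * Real.exp (C t) = g t₀ * Real.exp (C t₀) := by
    intro t
    exact is_const_of_deriv_eq_zero (fun x => (hh x).differentiableAt)
      (fun x => (hh x).deriv) t t₀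
  have hg0 : ∀ t, g t = 0 := by
    intro t
    have h0 : g t₀ = 0 := by simp [hg_def, hnorm]
    have := hconst t
    rw [h0, zero_mul] at this
    exact (mul_eq_zero.1 this).resolve_right (Real.exp_ne_zero _)
  intro t
  have hunit : v t ⬝ᵥ v t = 1 := by
    have := hg0 t
    simp only [hg_def] at this
    linarith
  refine ⟨hunit, ?_⟩
  have htr : v t ⬝ᵥ ((A t)ᵀ.mulVec (v t)) = v t ⬝ᵥ ((A t).mulVec (v t)) := by
    rw [Matrix.mulVec_transpose, dotProduct_comm, ← Matrix.dotProduct_mulVec]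
  rw [Matrix.smul_mulVec, Matrix.add_mulVec, dotProduct_smul, dotProduct_add, htr,
    smul_eq_mul]
  ring
end
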